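/- Let θ > 0 and Δ_n > 0 with Δ_n → 0 and nΔ_n → ∞. With ρ(t) = e^{-θ|t|}/(2θ), there is a constant C > 0 depending only on θ such that for all large n, |(2Δ_n/n) Σ_{i,j=0}^{n-1} ρ((j-i)Δ_n)² - 1/(2θ³)| ≤ C(Δ_n² + 1/(nΔ_n)). -/

import Mathlib

/-!
With `x = θΔ` and `r = e^{-2x}`, the double sum is `(4θ²)⁻¹ Σ_{i,j<n} r^{|i-j|}`, and this
Toeplitz sum of a geometric sequence has the closed form `(1-r)² Σ = n(1-r²) - 2r(1-rⁿ)`.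
Since `(1+r)/(1-r) = coth x` and `r/(1-r)² = 1/(4 sinh² x)`, the normalized sum equals
`Δ coth x / (2θ²) - Δ(1-rⁿ) / (4θ²n sinh² x)`. The first term exceeds `1/(2θ³)` by
`(x coth x - 1)/(2θ³) ∈ [0, Δ²/(2θ)]`, because `sinh x ≤ x cosh x ≤ (1+x²) sinh x`; the second
lies in `[0, 1/(4θ⁴nΔ)]` because `x ≤ sinh x`.
-/

open Real Filter Finset

theorem Nat.cast_dist {α : Type*} [Ring α] [LinearOrder α] [IsStrictOrderedRing α] (i j : ℕ) :
    (Nat.dist i j : α) = |(i : α) - j| := by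
  rcases le_total i j with h | h
  · rw [Nat.dist_eq_sub_of_le h, Nat.cast_sub h, abs_sub_comm,
      abs_of_nonneg (sub_nonneg.2 (Nat.cast_le.2 h))]
  · rw [Nat.dist_eq_sub_of_le_right h, Nat.cast_sub h,
      abs_of_nonneg (sub_nonneg.2 (Nat.cast_le.2 h))]

section DistSum

variable {R : Type*} [CommRing R]

theorem sum_range_succ_sum_range_succ_pow_dist (r : R) (n : ℕ) :
    ∑ i ∈ range (n + 1), ∑ j ∈ range (n + 1), r ^ Nat.dist i j
      = ∑ i ∈ range n, ∑ j ∈ range n, r ^ Nat.dist i j + 2 * r * ∑ k ∈ range n, r ^ k + 1 := by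
  have hrow : ∑ i ∈ range n, r ^ Nat.dist i n = r * ∑ k ∈ range n, r ^ k :=
    calc ∑ i ∈ range n, r ^ Nat.dist i n = ∑ i ∈ range n, r ^ (n - i) :=
          sum_congr rfl fun i hi => by rw [Nat.dist_eq_sub_of_le (mem_range.1 hi).le]
      _ = ∑ k ∈ range n, r ^ (k + 1) := by
          rw [← sum_range_reflect]
          exact sum_congr rfl fun k hk => by have := mem_range.1 hk; congr 1; omega
      _ = r * ∑ k ∈ range n, r ^ k := by simp only [mul_sum, pow_succ']
  have hcol : ∑ j ∈ range n, r ^ Nat.dist n j = r * ∑ k ∈ range n, r ^ k := by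
    rw [← hrow]
    exact sum_congr rfl fun j _ => by rw [Nat.dist_comm]
  simp only [sum_range_succ, sum_add_distrib, Nat.dist_self, pow_zero, hrow, hcol]
  ring

theorem one_sub_sq_mul_sum_range_sum_range_pow_dist (r : R) (n : ℕ) :
    (1 - r) ^ 2 * ∑ i ∈ range n, ∑ j ∈ range n, r ^ Nat.dist i j
      = n * (1 - r ^ 2) - 2 * r * (1 - r ^ n) := by
  induction n with
  | zero => simp
  | succ n ih =>
    rw [sum_range_succ_sum_range_succ_pow_dist, mul_add, mul_add, ih]
    push_cast
    linear_combination (2 * r * (1 - r)) * mul_neg_geom_sum r n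

end DistSum

namespace Real

theorem mul_sinh_nonneg (x : ℝ) : 0 ≤ x * sinh x := by
  rcases le_total 0 x with hx | hx
  · exact mul_nonneg hx (sinh_nonneg_iff.2 hx)
  · exact mul_nonneg_of_nonpos_of_nonpos hx (sinh_nonpos_iff.2 hx)

theorem sinh_le_mul_cosh {x : ℝ} (hx : 0 ≤ x) : sinh x ≤ x * cosh x := by
  have hderiv : ∀ y, HasDerivAt (fun y => y * cosh y - sinh y) (y * sinh y) y := fun y =>
    (((hasDerivAt_id' y).fun_mul (hasDerivAt_cosh y)).fun_sub (hasDerivAt_sinh y)).congr_deriv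
      (by ring)
  have hmono : Monotone (fun y => y * cosh y - sinh y) :=
    monotone_of_deriv_nonneg (fun y => (hderiv y).differentiableAt) fun y => by
      rw [(hderiv y).deriv]
      exact mul_sinh_nonneg y
  simpa using hmono hx

theorem mul_cosh_le_one_add_sq_mul_sinh {x : ℝ} (hx : 0 ≤ x) :
    x * cosh x ≤ (1 + x ^ 2) * sinh x := by
  have hderiv : ∀ y, HasDerivAt (fun y => (1 + y ^ 2) * sinh y - y * cosh y)
      (y * sinh y + y ^ 2 * cosh y) y := fun y =>
    ((((hasDerivAt_pow 2 y).const_add 1).fun_mul (hasDerivAt_sinh y)).fun_sub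
      ((hasDerivAt_id' y).fun_mul (hasDerivAt_cosh y))).congr_deriv (by push_cast; ring)
  have hmono : Monotone (fun y => (1 + y ^ 2) * sinh y - y * cosh y) :=
    monotone_of_deriv_nonneg (fun y => (hderiv y).differentiableAt) fun y => by
      rw [(hderiv y).deriv]
      have := mul_sinh_nonneg y
      positivity
  simpa using hmono hx

theorem one_sub_exp_neg_sq (x : ℝ) : 1 - exp (-x) ^ 2 = 2 * exp (-x) * sinh x := by
  rw [sinh_eq, exp_neg]
  field_simp

theorem one_add_exp_neg_sq (x : ℝ) : 1 + exp (-x) ^ 2 = 2 * exp (-x) * cosh x := by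
  rw [cosh_eq, exp_neg]
  field_simp

end Real

theorem sum_range_sum_range_exp_neg_sq_pow_dist {x : ℝ} (hx : x ≠ 0) (n : ℕ) :
    ∑ i ∈ range n, ∑ j ∈ range n, (exp (-x) ^ 2) ^ Nat.dist i j
      = n * cosh x / sinh x - (1 - exp (-x) ^ (2 * n)) / (2 * sinh x ^ 2) := by
  have h := one_sub_sq_mul_sum_range_sum_range_pow_dist (exp (-x) ^ 2) n
  have hsub := one_sub_exp_neg_sq x
  have hadd := one_add_exp_neg_sq x
  have hs : sinh x ≠ 0 := sinh_ne_zero.2 hx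
  set S := ∑ i ∈ range n, ∑ j ∈ range n, (exp (-x) ^ 2) ^ Nat.dist i j
  set e := exp (-x)
  field_simp
  apply mul_left_cancel₀ (show 2 * e ^ 2 ≠ 0 by positivity)
  linear_combination h - S * (2 * e * sinh x + 1 - e ^ 2) * hsub
    + n * (2 * e * sinh x * hadd + (1 + e ^ 2) * hsub)

noncomputable def ouCovariance (θ t : ℝ) : ℝ := exp (-θ * |t|) / (2 * θ)

theorem ouCovariance_sq_sub_mul {Δ : ℝ} (hΔ : 0 ≤ Δ) (θ : ℝ) (i j : ℕ) :
    ouCovariance θ (((j : ℝ) - i) * Δ) ^ 2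
      = (exp (-(θ * Δ)) ^ 2) ^ Nat.dist i j / (4 * θ ^ 2) := by
  rw [ouCovariance, abs_mul, abs_of_nonneg hΔ, abs_sub_comm, ← Nat.cast_dist,
    show -θ * ((Nat.dist i j : ℝ) * Δ) = Nat.dist i j * (-(θ * Δ)) by ring, exp_nat_mul,
    div_pow, ← pow_mul, ← pow_mul, mul_comm]
  ring

theorem normalized_sum_ouCovariance_sq_sub_eq {θ Δ : ℝ} (hθ : 0 < θ) (hΔ : 0 < Δ) {n : ℕ}
    (hn : n ≠ 0) :
    2 * Δ / n * ∑ i ∈ range n, ∑ j ∈ range n, ouCovariance θ (((j : ℝ) - i) * Δ) ^ 2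
        - 1 / (2 * θ ^ 3)
      = (θ * Δ * cosh (θ * Δ) - sinh (θ * Δ)) / (2 * θ ^ 3 * sinh (θ * Δ))
        - Δ * (1 - exp (-(θ * Δ)) ^ (2 * n)) / (4 * θ ^ 2 * n * sinh (θ * Δ) ^ 2) := by
  have hx : θ * Δ ≠ 0 := (mul_pos hθ hΔ).ne'
  simp only [ouCovariance_sq_sub_mul hΔ.le, ← sum_div,
    sum_range_sum_range_exp_neg_sq_pow_dist hx]
  field_simp
  ring

theorem abs_normalized_sum_ouCovariance_sq_sub_le {θ Δ : ℝ} (hθ : 0 < θ) (hΔ : 0 < Δ)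
    {n : ℕ} (hn : n ≠ 0) :
    |2 * Δ / n * ∑ i ∈ range n, ∑ j ∈ range n, ouCovariance θ (((j : ℝ) - i) * Δ) ^ 2
        - 1 / (2 * θ ^ 3)|
      ≤ Δ ^ 2 / (2 * θ) + 1 / (4 * θ ^ 4 * (n * Δ)) := by
  rw [normalized_sum_ouCovariance_sq_sub_eq hθ hΔ hn]
  set x := θ * Δ with hx_def
  have hx : 0 < x := mul_pos hθ hΔ
  have hE : 0 ≤ 1 - exp (-x) ^ (2 * n) :=
    sub_nonneg.2 (pow_le_one₀ (exp_pos _).le (exp_le_one_iff.2 (by linarith)))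
  have hbulk : (x * cosh x - sinh x) / (2 * θ ^ 3 * sinh x) ≤ Δ ^ 2 / (2 * θ) := by
    rw [div_le_div_iff₀ (by positivity) (by positivity)]
    nlinarith [mul_cosh_le_one_add_sq_mul_sinh hx.le]
  have hedge : Δ * (1 - exp (-x) ^ (2 * n)) / (4 * θ ^ 2 * n * sinh x ^ 2)
      ≤ 1 / (4 * θ ^ 4 * (n * Δ)) :=
    calc Δ * (1 - exp (-x) ^ (2 * n)) / (4 * θ ^ 2 * n * sinh x ^ 2)
        ≤ Δ * 1 / (4 * θ ^ 2 * n * x ^ 2) := by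
          gcongr
          · linarith [pow_nonneg (exp_pos (-x)).le (2 * n)]
          · exact self_le_sinh_iff.2 hx.le
      _ = 1 / (4 * θ ^ 4 * (n * Δ)) := by
          rw [hx_def]
          field_simp
  refine abs_sub_le_of_nonneg_of_le ?_ ?_ ?_ ?_
  · exact div_nonneg (sub_nonneg.2 (sinh_le_mul_cosh hx.le)) (by positivity)
  · exact hbulk.trans (le_add_of_nonneg_right (by positivity))
  · exact div_nonneg (mul_nonneg hΔ.le hE) (by positivity)
  · exact hedge.trans (le_add_of_nonneg_left (by positivity))

theorem variance_asymptotics_general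
    (θ : ℝ) (hθ : 0 < θ) (Δ : ℕ → ℝ) (hΔpos : ∀ n, 0 < Δ n) :
    ∃ C > 0, ∀ᶠ n : ℕ in atTop,
      |(2 * Δ n / n) * ∑ i ∈ range n, ∑ j ∈ range n,
          (exp (-θ * |((j : ℝ) - i) * Δ n|) / (2 * θ)) ^ 2
        - 1 / (2 * θ ^ 3)|
      ≤ C * ((Δ n) ^ 2 + 1 / ((n : ℝ) * Δ n)) := by
  refine ⟨1 / (2 * θ) + 1 / (4 * θ ^ 4), by positivity, ?_⟩
  filter_upwards [eventually_ne_atTop 0] with n hn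
  have hΔ := hΔpos n
  calc _ ≤ Δ n ^ 2 / (2 * θ) + 1 / (4 * θ ^ 4 * (n * Δ n)) :=
        abs_normalized_sum_ouCovariance_sq_sub_le hθ hΔ hn
    _ ≤ Δ n ^ 2 / (2 * θ) + 1 / (4 * θ ^ 4 * (n * Δ n))
          + (Δ n ^ 2 / (4 * θ ^ 4) + 1 / (2 * θ) * (1 / (n * Δ n))) :=
        le_add_of_nonneg_right (by positivity)
    _ = _ := by ring

/-- Variance asymptotics: with `ρ(t) = e^{-θ|t|}/(2θ)`, `Δ_n → 0` and `nΔ_n → ∞`,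
there is `C > 0` (depending only on `θ`) such that for all large `n`,
`|(2Δ_n/n) Σ_{i,j<n} ρ((j-i)Δ_n)² - 1/(2θ³)| ≤ C(Δ_n² + 1/(nΔ_n))`. -/
theorem variance_asymptotics
    (θ : ℝ) (hθ : 0 < θ) (Δ : ℕ → ℝ) (hΔpos : ∀ n, 0 < Δ n)
    (hΔ0 : Tendsto Δ atTop (nhds 0))
    (hT : Tendsto (fun n : ℕ => (n : ℝ) * Δ n) atTop atTop) :
    ∃ C > 0, ∀ᶠ n : ℕ in atTop,
      |(2 * Δ n / n) * ∑ i ∈ range n, ∑ j ∈ range n,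
          (exp (-θ * |((j : ℝ) - i) * Δ n|) / (2 * θ)) ^ 2
        - 1 / (2 * θ ^ 3)|
      ≤ C * ((Δ n) ^ 2 + 1 / ((n : ℝ) * Δ n)) :=
  variance_asymptotics_general θ hθ Δ hΔpos
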